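/- arXiv:1502.05154 — 3 statements merged into one kernel-verified Lean document; each statement's English description precedes it below -/
import Mathlib

section
/- Let u be a radial function in H¹(ℝ^{2N}) with N ≥ 1. Then for almost every x ∈ ℝ^{2N}, |u(x)| ≤ √((N−1)!/π^N) · ‖u‖_{L²}^{1/2} ‖∇u‖_{L²}^{1/2} / |x|^{N−1/2}. -/
/-!
Strauss' radial lemma. Write `u x = v ‖x‖` in dimension `d`. Since
`(s ^ (d-1) * v s ^ 2)' ≥ -2 * s ^ (d-1) * |v s| * |v' s|` and `s ^ (d-1) * v s ^ 2` is integrable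
at infinity, `r ^ (d-1) * v r ^ 2 ≤ 2 * ∫_r^∞ s ^ (d-1) * |v s| * |v' s| ds`, which in polar
coordinates is at most `2 / |S^(d-1)| * ∫ |u| * ‖∇u‖`. Cauchy–Schwarz and
`|S^(2N-1)| = 2 * π ^ N / (N-1)!` give the estimate.
-/

open MeasureTheory
open Set Metric Module

theorem norm_fderiv_eq_of_norm_eq {E F : Type*} [NormedAddCommGroup E] [InnerProductSpace ℝ E]
    [NormedAddCommGroup F] [NormedSpace ℝ F] {u : E → F}
    (hrad : ∀ x y : E, ‖x‖ = ‖y‖ → u x = u y) {x y : E} (h : ‖x‖ = ‖y‖) :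
    ‖fderiv ℝ u x‖ = ‖fderiv ℝ u y‖ := by
  -- the reflection exchanging `x` and `y` is a symmetry of `u`
  set T := (ℝ ∙ (x - y))ᗮ.reflection
  have hu : u ∘ T = u := funext fun z => hrad _ _ (T.norm_map z)
  have hTx : T x = y := Submodule.reflection_sub h
  have := T.toContinuousLinearEquiv.comp_right_fderiv (f := u) (x := x)
  rw [LinearIsometryEquiv.coe_toContinuousLinearEquiv, hu, hTx] at this
  rw [this]
  exact ContinuousLinearMap.opNorm_comp_linearIsometryEquiv _ T

theorem integral_norm_mul_norm_le_sqrt {α E F : Type*} [MeasurableSpace α] {μ : Measure α}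
    [NormedAddCommGroup E] [NormedAddCommGroup F] {f : α → E} {g : α → F}
    (hf : MemLp f 2 μ) (hg : MemLp g 2 μ) :
    ∫ a, ‖f a‖ * ‖g a‖ ∂μ ≤ √(∫ a, ‖f a‖ ^ 2 ∂μ) * √(∫ a, ‖g a‖ ^ 2 ∂μ) := by
  have h2 : ENNReal.ofReal 2 = 2 := by norm_num
  have := integral_mul_le_Lp_mul_Lq_of_nonneg Real.HolderConjugate.two_two
    (.of_forall fun a => norm_nonneg (f a)) (.of_forall fun a => norm_nonneg (g a))
    (h2 ▸ hf.norm) (h2 ▸ hg.norm)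
  simpa only [← Real.sqrt_eq_rpow, Real.rpow_two] using this

theorem exists_lt_of_integrableOn_Ioi {g : ℝ → ℝ} {r ε : ℝ} (hg : IntegrableOn g (Ioi r))
    (hε : 0 < ε) : ∃ R > r, g R < ε := by
  by_contra! hge
  have hconst : IntegrableOn (fun _ => ε) (Ioi r) :=
    hg.mono' aestronglyMeasurable_const <| (ae_restrict_mem measurableSet_Ioi).mono
      fun s hs => (Real.norm_of_nonneg hε.le).trans_le (hge s hs)
  simp [hε.ne'] at hconst

theorem pow_mul_sq_le_two_mul_integral {k : ℕ} {v v' w : ℝ → ℝ} {r : ℝ} (hr : 0 ≤ r)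
    (hv : ∀ s ∈ Ici r, HasDerivAt v (v' s) s) (hvw : ∀ s ∈ Ioi r, |v' s| ≤ w s)
    (hg : IntegrableOn (fun s => s ^ k * v s ^ 2) (Ioi r))
    (hF : IntegrableOn (fun s => s ^ k * (|v s| * w s)) (Ioi r)) :
    r ^ k * v r ^ 2 ≤ 2 * ∫ s in Ioi r, s ^ k * (|v s| * w s) := by
  have hderiv : ∀ s ∈ Ici r, HasDerivAt (fun s => s ^ k * v s ^ 2)
      (k * s ^ (k - 1) * v s ^ 2 + s ^ k * (2 * v s * v' s)) s := fun s hs =>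
    ((hasDerivAt_pow k s).mul ((hv s hs).pow 2)).congr_deriv (by simp)
  have hderiv_ge : ∀ s ∈ Ioi r,
      -(2 * (s ^ k * (|v s| * w s))) ≤ k * s ^ (k - 1) * v s ^ 2 + s ^ k * (2 * v s * v' s) := by
    intro s hs
    have hs0 : 0 ≤ s := hr.trans hs.le
    have hvv' : -(|v s| * w s) ≤ v s * v' s :=
      calc -(|v s| * w s) ≤ -(|v s| * |v' s|) := by gcongr; exact hvw s hs
        _ ≤ v s * v' s := by rw [← abs_mul]; exact neg_abs_le _
    have := mul_le_mul_of_nonneg_left hvv' (pow_nonneg hs0 k)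
    have : 0 ≤ k * s ^ (k - 1) * v s ^ 2 := by positivity
    nlinarith
  have hdrop : ∀ R, r ≤ R →
      r ^ k * v r ^ 2 ≤ R ^ k * v R ^ 2 + 2 * ∫ s in Ioi r, s ^ k * (|v s| * w s) := by
    intro R hR
    have hIcc : Icc r R ⊆ Ici r := Icc_subset_Ici_self
    have hφ : IntegrableOn (fun s => -(2 * (s ^ k * (|v s| * w s)))) (Icc r R) :=
      (integrableOn_Icc_iff_integrableOn_Ioc).2 ((hF.mono_set Ioc_subset_Ioi_self).const_mul 2).neg
    have hFTC := intervalIntegral.integral_le_sub_of_hasDeriv_right_of_le hR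
      (fun s hs => (hderiv s (hIcc hs)).continuousAt.continuousWithinAt)
      (fun s hs => (hderiv s (hIcc (Ioo_subset_Icc_self hs))).hasDerivWithinAt) hφ
      (fun s hs => hderiv_ge s hs.1)
    have hF_nonneg : ∀ s ∈ Ioi r, 0 ≤ s ^ k * (|v s| * w s) := fun s hs =>
      mul_nonneg (pow_nonneg (hr.trans hs.le) k)
        (mul_nonneg (abs_nonneg _) ((abs_nonneg _).trans (hvw s hs)))
    have hbound : ∫ s in r..R, 2 * (s ^ k * (|v s| * w s)) ≤
        2 * ∫ s in Ioi r, s ^ k * (|v s| * w s) := by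
      rw [intervalIntegral.integral_of_le hR, integral_const_mul]
      refine mul_le_mul_of_nonneg_left ?_ zero_le_two
      exact setIntegral_mono_set hF ((ae_restrict_mem measurableSet_Ioi).mono hF_nonneg)
        Ioc_subset_Ioi_self.eventuallyLE
    rw [intervalIntegral.integral_neg] at hFTC
    linarith
  refine le_of_forall_pos_le_add fun ε hε => ?_
  obtain ⟨R, hR, hgR⟩ := exists_lt_of_integrableOn_Ioi hg hε
  linarith [hdrop R hR.le]

section Radial

variable {E : Type*} [NormedAddCommGroup E] [InnerProductSpace ℝ E] [FiniteDimensional ℝ E]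
  [Nontrivial E] [MeasurableSpace E] [BorelSpace E] (μ : Measure E) [μ.IsAddHaarMeasure]
  {u : E → ℝ}

theorem pow_mul_sq_le_integral_abs_mul_norm_fderiv
    (hrad : ∀ x y : E, ‖x‖ = ‖y‖ → u x = u y) (hdiff : Differentiable ℝ u)
    (hu2 : Integrable (fun x => u x ^ 2) μ)
    (huDu : Integrable (fun x => |u x| * ‖fderiv ℝ u x‖) μ) (x : E) :
    finrank ℝ E * μ.real (ball 0 1) * (‖x‖ ^ (finrank ℝ E - 1) * u x ^ 2) ≤
      2 * ∫ y, |u y| * ‖fderiv ℝ u y‖ ∂μ := by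
  obtain ⟨e, he⟩ := exists_norm_eq E zero_le_one
  set v : ℝ → ℝ := fun s => u (s • e)
  set w : ℝ → ℝ := fun s => ‖fderiv ℝ u (s • e)‖
  have hnorm : ∀ y : E, ‖‖y‖ • e‖ = ‖y‖ := fun y => by simp [norm_smul, he]
  have hu : ∀ y, u y = v ‖y‖ := fun y => hrad _ _ (hnorm y).symm
  have hDu : ∀ y, ‖fderiv ℝ u y‖ = w ‖y‖ := fun y => norm_fderiv_eq_of_norm_eq hrad (hnorm y).symm
  have hv : ∀ s, HasDerivAt v (fderiv ℝ u (s • e) e) s := fun s =>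
    (hdiff _).hasFDerivAt.comp_hasDerivAt s (by simpa using (hasDerivAt_id s).smul_const e)
  have hvw : ∀ s, |fderiv ℝ u (s • e) e| ≤ w s := fun s => by
    simpa [he] using (fderiv ℝ u (s • e)).le_opNorm e
  simp only [hu, hDu] at hu2 huDu ⊢
  rw [integrable_fun_norm_addHaar μ (f := fun s => v s ^ 2)] at hu2
  rw [integrable_fun_norm_addHaar μ (f := fun s => |v s| * w s)] at huDu
  rw [integral_fun_norm_addHaar μ (fun s => |v s| * w s)]
  simp only [smul_eq_mul, nsmul_eq_mul] at hu2 huDu ⊢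
  have hIoi : Ioi ‖x‖ ⊆ Ioi 0 := Ioi_subset_Ioi (norm_nonneg x)
  have hdecay := pow_mul_sq_le_two_mul_integral (norm_nonneg x) (fun s _ => hv s)
    (fun s _ => hvw s) (hu2.mono_set hIoi) (huDu.mono_set hIoi)
  have hmono : ∫ s in Ioi ‖x‖, s ^ (finrank ℝ E - 1) * (|v s| * w s) ≤
      ∫ s in Ioi 0, s ^ (finrank ℝ E - 1) * (|v s| * w s) :=
    setIntegral_mono_set huDu ((ae_restrict_mem measurableSet_Ioi).mono fun s (hs : 0 < s) =>
      by positivity) hIoi.eventuallyLE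
  have hc : 0 ≤ finrank ℝ E * μ.real (ball 0 1) := by positivity
  calc _ ≤ finrank ℝ E * μ.real (ball 0 1) *
        (2 * ∫ s in Ioi 0, s ^ (finrank ℝ E - 1) * (|v s| * w s)) :=
          mul_le_mul_of_nonneg_left (by linarith) hc
    _ = _ := by ring

theorem norm_pow_mul_sq_le_of_radial
    (hrad : ∀ x y : E, ‖x‖ = ‖y‖ → u x = u y) (hdiff : Differentiable ℝ u)
    (hu2 : Integrable (fun x => u x ^ 2) μ) (hgrad2 : Integrable (fun x => ‖fderiv ℝ u x‖ ^ 2) μ)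
    (x : E) :
    ‖x‖ ^ (finrank ℝ E - 1) * u x ^ 2 ≤ 2 / (finrank ℝ E * μ.real (ball 0 1)) *
      (√(∫ y, u y ^ 2 ∂μ) * √(∫ y, ‖fderiv ℝ u y‖ ^ 2 ∂μ)) := by
  have hu : MemLp u 2 μ :=
    (memLp_two_iff_integrable_sq hdiff.continuous.aestronglyMeasurable).2 hu2
  have hDu : MemLp (fderiv ℝ u) 2 μ :=
    (memLp_two_iff_integrable_sq_norm (measurable_fderiv ℝ u).aestronglyMeasurable).2 hgrad2
  have hCS : ∫ y, |u y| * ‖fderiv ℝ u y‖ ∂μ ≤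
      √(∫ y, u y ^ 2 ∂μ) * √(∫ y, ‖fderiv ℝ u y‖ ^ 2 ∂μ) := by
    simpa only [Real.norm_eq_abs, sq_abs] using integral_norm_mul_norm_le_sqrt hu hDu
  have hball : 0 < μ.real (ball 0 1) :=
    ENNReal.toReal_pos (measure_ball_pos μ 0 one_pos).ne' measure_ball_lt_top.ne
  rw [div_mul_eq_mul_div, le_div_iff₀' (mul_pos (Nat.cast_pos.2 finrank_pos) hball)]
  exact (pow_mul_sq_le_integral_abs_mul_norm_fderiv μ hrad hdiff hu2
    (hu.norm.integrable_mul hDu.norm) x).trans (by gcongr)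

end Radial

theorem two_div_finrank_mul_measureReal_ball_of_dim_even {E : Type*} [NormedAddCommGroup E]
    [InnerProductSpace ℝ E] [FiniteDimensional ℝ E] [MeasurableSpace E] [BorelSpace E]
    {N : ℕ} (hN : 1 ≤ N) (hE : finrank ℝ E = 2 * N) (x : E) :
    2 / (finrank ℝ E * volume.real (ball x 1)) = (N - 1).factorial / Real.pi ^ N := by
  have : Nontrivial E := Module.nontrivial_of_finrank_pos (R := ℝ) (by omega)
  rw [measureReal_def, InnerProductSpace.volume_ball_of_dim_even hE, ENNReal.ofReal_one, one_pow,
    one_mul, ENNReal.toReal_ofReal (by positivity), hE, ← Nat.mul_factorial_pred (by omega : N ≠ 0)]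
  have : ((N - 1).factorial : ℝ) ≠ 0 := by positivity
  have : (N : ℝ) ≠ 0 := by positivity
  have : Real.pi ^ N ≠ 0 := by positivity
  push_cast
  field_simp

theorem abs_le_sqrt_div_rpow_of_pow_mul_sq_le {N : ℕ} (hN : 1 ≤ N) {r a C : ℝ} (hr : 0 < r)
    (h : r ^ (2 * N - 1) * a ^ 2 ≤ C) : |a| ≤ √C / r ^ ((N : ℝ) - 1 / 2) := by
  have hpow : r ^ ((N : ℝ) - 1 / 2) = √(r ^ (2 * N - 1)) := by
    rw [Real.sqrt_eq_rpow, ← Real.rpow_natCast, ← Real.rpow_mul hr.le, Nat.cast_sub (by omega)]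
    push_cast
    ring_nf
  rw [hpow, le_div_iff₀ (by positivity), ← Real.sqrt_sq_eq_abs, ← Real.sqrt_mul (sq_nonneg _),
    mul_comm]
  exact Real.sqrt_le_sqrt h

theorem radial_estimate_H1
    (N : ℕ) (hN : 1 ≤ N)
    (u : EuclideanSpace ℝ (Fin (2 * N)) → ℝ)
    (hrad : ∀ x y : EuclideanSpace ℝ (Fin (2 * N)), ‖x‖ = ‖y‖ → u x = u y)
    (hdiff : Differentiable ℝ u)
    (hu2 : Integrable (fun x => u x ^ 2))
    (hgrad2 : Integrable (fun x => ‖fderiv ℝ u x‖ ^ 2)) :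
    ∀ᵐ x : EuclideanSpace ℝ (Fin (2 * N)),
      |u x| ≤ Real.sqrt ((Nat.factorial (N - 1)) / Real.pi ^ N) *
        Real.sqrt (Real.sqrt (∫ y, u y ^ 2)) *
        Real.sqrt (Real.sqrt (∫ y, ‖fderiv ℝ u y‖ ^ 2)) / ‖x‖ ^ ((N : ℝ) - 1 / 2) := by
  have hE : finrank ℝ (EuclideanSpace ℝ (Fin (2 * N))) = 2 * N := finrank_euclideanSpace_fin
  have : Nontrivial (EuclideanSpace ℝ (Fin (2 * N))) :=
    Module.nontrivial_of_finrank_pos (R := ℝ) (by omega)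
  filter_upwards [volume.ae_ne 0] with x hx
  have hpt := norm_pow_mul_sq_le_of_radial volume hrad hdiff hu2 hgrad2 x
  rw [two_div_finrank_mul_measureReal_ball_of_dim_even hN hE, hE] at hpt
  rw [mul_assoc, ← Real.sqrt_mul (Real.sqrt_nonneg _), ← Real.sqrt_mul (by positivity)]
  exact abs_le_sqrt_div_rpow_of_pow_mul_sq_le hN (norm_pos_iff.2 hx) hpt
end

section
/- Let β ∈ (0,1) and N ≥ 1 an integer. There exists a constant C_β > 0 such that for every non-negative, non-decreasing, absolutely continuous function w : ℝ → ℝ with w(t) = 0 for all t ≤ some t₀, and ∫_ℝ |w'(t)|² dt ≤ N, one has ∫_ℝ (e^{β w(t)²} − 1) e^{−Nt} dt ≤ C_β ∫_ℝ w(t)² e^{−Nt} dt. -/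
open MeasureTheory intervalIntegral

open Real Set Filter

/-!
By Cauchy–Schwarz, `|w t - w s| ≤ √N √(t - s)`, so `w` is continuous and `w²` grows at most
linearly. Where `w ≤ 1`, convexity of `exp` gives `e^{β w²} - 1 ≤ (e^β - 1) w²`. If `w` exceeds `1`,
let `t₁` be a time with `w t₁ = 1`; beyond it `w ≤ 1 + √(N (t - t₁))`, hence
`β w² ≤ K + γ N (t - t₁)` with `K = β (1 + β) / (1 - β)` and `γ = (1 + β) / 2 < 1`, and the tail
of the left-hand side is at most `e^K e^{-N t₁} / ((1 - γ) N)`. Since `w ≥ 1` there, the tail of the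
right-hand integral is at least `e^{-N t₁} / N`.
-/

theorem integral_abs_le_sqrt_integral_sq_mul_sqrt {α : Type*} [MeasurableSpace α]
    {μ : Measure α} [IsFiniteMeasure μ] {f : α → ℝ} (hf : Integrable (fun x => f x ^ 2) μ) :
    ∫ x, |f x| ∂μ ≤ √(∫ x, f x ^ 2 ∂μ) * √(μ.real univ) := by
  have hmeas : AEStronglyMeasurable (fun x => |f x|) μ := by
    simpa only [sqrt_sq_eq_abs] using continuous_sqrt.comp_aestronglyMeasurable hf.1
  have hf2 : MemLp (fun x => |f x|) (ENNReal.ofReal 2) μ := by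
    rw [ENNReal.ofReal_ofNat, memLp_two_iff_integrable_sq hmeas]
    simpa only [sq_abs] using hf
  have := integral_mul_le_Lp_mul_Lq_of_nonneg HolderConjugate.two_two
    (.of_forall fun x => abs_nonneg (f x)) (.of_forall fun _ => zero_le_one) hf2 (memLp_const 1)
  simpa [sqrt_eq_rpow, rpow_two] using this

theorem abs_sub_le_sqrt_mul_sqrt_of_integral_sq_le {w w' : ℝ → ℝ} {M : ℝ}
    (hftc : ∀ t₁ t₂ : ℝ, t₁ ≤ t₂ → w t₂ - w t₁ = ∫ τ in t₁..t₂, w' τ)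
    (hint : Integrable (fun t => w' t ^ 2)) (hM : ∫ t, w' t ^ 2 ≤ M) {s t : ℝ} (hst : s ≤ t) :
    |w t - w s| ≤ √M * √(t - s) := by
  rw [hftc s t hst, integral_of_le hst]
  calc |∫ τ in Ioc s t, w' τ| ≤ ∫ τ in Ioc s t, |w' τ| :=
        MeasureTheory.abs_integral_le_integral_abs
    _ ≤ √(∫ τ in Ioc s t, w' τ ^ 2) * √(volume.real (Ioc s t)) := by
      have : IsFiniteMeasure (volume.restrict (Ioc s t)) :=
        isFiniteMeasure_restrict.2 measure_Ioc_lt_top.ne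
      simpa using integral_abs_le_sqrt_integral_sq_mul_sqrt (hint.restrict (s := Ioc s t))
    _ ≤ √M * √(t - s) := by
      rw [volume_real_Ioc_of_le hst]
      gcongr
      exact (setIntegral_le_integral hint (.of_forall fun _ => sq_nonneg _)).trans hM

theorem continuous_of_abs_sub_le_mul_sqrt {f : ℝ → ℝ} {c : ℝ}
    (h : ∀ s t, s ≤ t → |f t - f s| ≤ c * √(t - s)) : Continuous f := by
  have h' : ∀ s t, |f t - f s| ≤ c * √|t - s| := by
    intro s t
    rcases le_total s t with hst | hts
    · simpa [abs_of_nonneg (sub_nonneg.2 hst)] using h s t hst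
    · simpa [abs_sub_comm, abs_of_nonneg (sub_nonneg.2 hts)] using h t s hts
  refine continuous_iff_continuousAt.2 fun a => ?_
  rw [ContinuousAt, tendsto_iff_norm_sub_tendsto_zero]
  refine squeeze_zero (fun _ => norm_nonneg _) (fun t => h' a t) ?_
  have : Continuous fun t => c * √|t - a| := by fun_prop
  simpa using this.tendsto a

theorem integral_Ioi_exp_neg_mul {ν : ℝ} (hν : 0 < ν) (a : ℝ) :
    ∫ t in Ioi a, exp (-ν * t) = exp (-ν * a) / ν := by
  rw [integral_exp_mul_Ioi (neg_lt_zero.2 hν), neg_div_neg_eq]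

theorem integrable_mul_exp_neg_mul_of_le_linear {φ : ℝ → ℝ} (hφ : AEStronglyMeasurable φ)
    {a M ν : ℝ} (hM : 0 ≤ M) (hν : 0 < ν) (h0 : ∀ t ≤ a, φ t = 0)
    (hle : ∀ t > a, |φ t| ≤ M * (t - a)) :
    Integrable (fun t => φ t * exp (-ν * t)) := by
  rw [← integrableOn_univ, ← Iic_union_Ioi (a := a)]
  refine IntegrableOn.union ?_ ?_
  · exact integrableOn_zero.congr_fun (fun t ht => by simp [h0 t ht]) measurableSet_Iic
  refine Integrable.mono' ((integrableOn_exp_mul_Ioi (a := -(ν / 2)) (by linarith) a).const_mul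
    (2 * M / ν * exp (-(ν / 2) * a))) (by fun_prop) ?_
  refine (ae_restrict_iff' measurableSet_Ioi).2 (.of_forall fun t ht => ?_)
  -- `x ≤ exp x` at `x = ν (t - a) / 2` trades the linear growth for half of the decay rate.
  have hlin : t - a ≤ 2 / ν * exp (ν / 2 * (t - a)) := by
    have := add_one_le_exp (ν / 2 * (t - a))
    rw [div_mul_eq_mul_div, le_div_iff₀ hν]
    nlinarith [exp_pos (ν / 2 * (t - a))]
  calc ‖φ t * exp (-ν * t)‖ = |φ t| * exp (-ν * t) := by
        rw [norm_mul, norm_of_nonneg (exp_pos _).le, Real.norm_eq_abs]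
    _ ≤ M * (2 / ν * exp (ν / 2 * (t - a))) * exp (-ν * t) := by
        gcongr
        exact (hle t ht).trans (mul_le_mul_of_nonneg_left hlin hM)
    _ = 2 * M / ν * exp (-(ν / 2) * a) * exp (-(ν / 2) * t) := by
        rw [mul_assoc, mul_assoc, ← exp_add, mul_assoc, ← exp_add]
        ring_nf

theorem integrable_sq_mul_exp_neg_mul_of_abs_sub_le {u : ℝ → ℝ} (hu : Continuous u)
    {a M ν : ℝ} (hM : 0 ≤ M) (hν : 0 < ν) (h0 : ∀ t ≤ a, u t = 0)
    (hhol : ∀ t, a ≤ t → |u t - u a| ≤ √M * √(t - a)) :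
    Integrable fun t => u t ^ 2 * exp (-ν * t) := by
  refine integrable_mul_exp_neg_mul_of_le_linear (a := a) (hu.pow 2).aestronglyMeasurable hM hν
    (fun t ht => by simp [h0 t ht]) fun t ht => ?_
  have hut := hhol t ht.le
  rw [h0 a le_rfl, sub_zero] at hut
  calc |u t ^ 2| = |u t| ^ 2 := abs_pow _ _
    _ ≤ (√M * √(t - a)) ^ 2 := by gcongr
    _ = M * (t - a) := by rw [mul_pow, sq_sqrt hM, sq_sqrt (sub_nonneg.2 ht.le)]

theorem exp_mul_sub_one_le_mul (β : ℝ) {y : ℝ} (hy0 : 0 ≤ y) (hy1 : y ≤ 1) :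
    exp (β * y) - 1 ≤ (exp β - 1) * y := by
  have := convexOn_exp.2 (mem_univ β) (mem_univ 0) hy0 (sub_nonneg.2 hy1) (add_sub_cancel y 1)
  simp only [smul_eq_mul, mul_zero, add_zero, exp_zero, mul_one, mul_comm y β] at this
  linarith

theorem mul_sq_le_of_le_one_add_sqrt {β x y : ℝ} (hβ0 : 0 ≤ β) (hβ1 : β < 1) (hx : 0 ≤ x)
    (hy : 0 ≤ y) (h : x ≤ 1 + √y) :
    β * x ^ 2 ≤ β * (1 + β) / (1 - β) + (1 + β) / 2 * y := by
  have hβ : 0 < 1 - β := by linarith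
  calc β * x ^ 2 ≤ β * (1 + √y) ^ 2 := by gcongr
    _ ≤ β * (1 + β) / (1 - β) + (1 + β) / 2 * √y ^ 2 := by
      rw [div_add' _ _ _ hβ.ne', le_div_iff₀ hβ]
      -- the gap is `((1 - β) √y - 2 β)² / 2`
      nlinarith [sq_nonneg ((1 - β) * √y - 2 * β)]
    _ = β * (1 + β) / (1 - β) + (1 + β) / 2 * y := by rw [sq_sqrt hy]

theorem integral_le_mul_integral_of_le_exp_on_Ioi {f g : ℝ → ℝ} {a c K γ ν : ℝ}
    (hγ : γ < 1) (hν : 0 < ν) (hc : 0 ≤ c) (hf : ∀ t, 0 ≤ f t) (hg : Integrable g)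
    (hg0 : ∀ t, 0 ≤ g t) (hIic : ∀ t ≤ a, f t ≤ c * g t)
    (hIoi : ∀ t > a, f t ≤ exp (K + γ * ν * (t - a)) * exp (-ν * t))
    (hlow : ∀ t > a, exp (-ν * t) ≤ g t) :
    ∫ t, f t ≤ (c + exp K / (1 - γ)) * ∫ t, g t := by
  have hb : 0 < (1 - γ) * ν := mul_pos (sub_pos.2 hγ) hν
  set E : ℝ → ℝ := fun t => exp (K - γ * ν * a) * exp (-((1 - γ) * ν) * t) with hE
  have hIoi' : ∀ t > a, f t ≤ E t := fun t ht => by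
    convert hIoi t ht using 1
    simp only [hE, ← exp_add]
    ring_nf
  have hEint : IntegrableOn E (Ioi a) :=
    (integrableOn_exp_mul_Ioi (neg_lt_zero.2 hb) a).const_mul _
  have hEval : ∫ t in Ioi a, E t = exp K / (1 - γ) * (exp (-ν * a) / ν) := by
    have hexp : exp (K - γ * ν * a) * exp (-((1 - γ) * ν) * a) = exp K * exp (-ν * a) := by
      rw [← exp_add, ← exp_add]
      ring_nf
    rw [MeasureTheory.integral_const_mul, integral_Ioi_exp_neg_mul hb, ← mul_div_assoc, hexp,
      div_mul_div_comm]
  have hgIoi : exp (-ν * a) / ν ≤ ∫ t, g t := by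
    rw [← integral_Ioi_exp_neg_mul hν a]
    refine (setIntegral_mono_on ?_ hg.integrableOn measurableSet_Ioi hlow).trans
      (setIntegral_le_integral hg (.of_forall hg0))
    exact integrableOn_exp_mul_Ioi (neg_lt_zero.2 hν) a
  have hpt : ∀ t, f t ≤ c * g t + (Ioi a).indicator E t := by
    intro t
    by_cases ht : t ∈ Ioi a
    · rw [indicator_of_mem ht]
      linarith [hIoi' t ht, mul_nonneg hc (hg0 t)]
    · rw [indicator_of_notMem ht, add_zero]
      exact hIic t (not_lt.1 ht)
  have hEind : Integrable ((Ioi a).indicator E) := hEint.integrable_indicator measurableSet_Ioi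
  calc ∫ t, f t ≤ ∫ t, (c * g t + (Ioi a).indicator E t) :=
        integral_mono_of_nonneg (.of_forall hf) ((hg.const_mul c).add hEind) (.of_forall hpt)
    _ = c * (∫ t, g t) + exp K / (1 - γ) * (exp (-ν * a) / ν) := by
        rw [integral_add (hg.const_mul c) hEind, MeasureTheory.integral_const_mul,
          MeasureTheory.integral_indicator measurableSet_Ioi, hEval]
    _ ≤ (c + exp K / (1 - γ)) * ∫ t, g t := by
        rw [add_mul]
        gcongr

theorem exp_weighted_estimate
    (β : ℝ) (hβ0 : 0 < β) (hβ1 : β < 1) (N : ℕ) (hN : 1 ≤ N) :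
    ∃ C > (0 : ℝ), ∀ w w' : ℝ → ℝ,
      (∀ t : ℝ, 0 ≤ w t) →
      Monotone w →
      (∃ t₀ : ℝ, ∀ t ≤ t₀, w t = 0) →
      (∀ t₁ t₂ : ℝ, t₁ ≤ t₂ → w t₂ - w t₁ = ∫ τ in t₁..t₂, w' τ) →
      Integrable (fun t => w' t ^ 2) →
      (∫ t, w' t ^ 2) ≤ N →
      (∫ t, (Real.exp (β * w t ^ 2) - 1) * Real.exp (-(N : ℝ) * t)) ≤
        C * ∫ t, w t ^ 2 * Real.exp (-(N : ℝ) * t) := by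
  have hγ : (1 + β) / 2 < 1 := by linarith
  have hc : 0 < exp β - 1 := by linarith [add_one_lt_exp hβ0.ne']
  have hK : 0 < exp (β * (1 + β) / (1 - β)) / (1 - (1 + β) / 2) :=
    div_pos (exp_pos _) (sub_pos.2 hγ)
  refine ⟨exp β - 1 + exp (β * (1 + β) / (1 - β)) / (1 - (1 + β) / 2), add_pos hc hK, ?_⟩
  rintro w w' hw0 hmono ⟨t₀, hvan⟩ hftc hint hM
  have hν : (0 : ℝ) < N := by exact_mod_cast hN
  have hhol : ∀ s t, s ≤ t → |w t - w s| ≤ √N * √(t - s) := fun s t =>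
    abs_sub_le_sqrt_mul_sqrt_of_integral_sq_le hftc hint hM
  have hcont : Continuous w := continuous_of_abs_sub_le_mul_sqrt hhol
  have hg : Integrable fun t => w t ^ 2 * exp (-N * t) :=
    integrable_sq_mul_exp_neg_mul_of_abs_sub_le hcont hν.le hν hvan fun t => hhol t₀ t
  have hf0 : ∀ t, 0 ≤ (exp (β * w t ^ 2) - 1) * exp (-N * t) := fun t =>
    mul_nonneg (sub_nonneg.2 (one_le_exp (by positivity))) (exp_pos _).le
  have hsmall : ∀ t, w t ≤ 1 →
      (exp (β * w t ^ 2) - 1) * exp (-N * t) ≤ (exp β - 1) * (w t ^ 2 * exp (-N * t)) := by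
    intro t ht
    rw [← mul_assoc]
    gcongr
    exact exp_mul_sub_one_le_mul β (sq_nonneg _) (pow_le_one₀ (hw0 t) ht)
  by_cases hbig : ∀ t, w t ≤ 1
  · calc _ ≤ ∫ t, (exp β - 1) * (w t ^ 2 * exp (-N * t)) :=
          integral_mono_of_nonneg (.of_forall hf0) (hg.const_mul _)
            (.of_forall fun t => hsmall t (hbig t))
      _ ≤ _ := by
          rw [MeasureTheory.integral_const_mul]
          gcongr
          linarith
  push Not at hbig
  obtain ⟨t', ht'⟩ := hbig
  obtain ⟨t₁, ht₁⟩ : 1 ∈ range w :=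
    intermediate_value_univ t₀ t' hcont ⟨by simp [hvan t₀ le_rfl], ht'.le⟩
  refine integral_le_mul_integral_of_le_exp_on_Ioi (a := t₁) hγ hν hc.le hf0 hg
    (fun t => mul_nonneg (sq_nonneg _) (exp_pos _).le)
    (fun t ht => hsmall t ((hmono ht).trans ht₁.le)) (fun t ht => ?_) (fun t ht => ?_)
  · have hwt : w t ≤ 1 + √(N * (t - t₁)) := by
      have := hhol t₁ t ht.le
      rw [ht₁] at this
      rw [sqrt_mul hν.le]
      linarith [le_abs_self (w t - 1)]
    have := mul_sq_le_of_le_one_add_sqrt hβ0.le hβ1 (hw0 t)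
      (mul_nonneg hν.le (sub_nonneg.2 ht.le)) hwt
    calc _ ≤ exp (β * w t ^ 2) * exp (-N * t) := by gcongr; linarith
      _ ≤ _ := by gcongr; linarith
  · exact le_mul_of_one_le_left (exp_pos _).le (one_le_pow₀ (ht₁ ▸ hmono ht.le))
end

section
/- Let N ≥ 2 and v : [0,R] → ℝ be absolutely continuous with v(R) = 0. Define w(s) = √(Nπ^{N−1}/(N−1)!) · v(s^{1/N}) for s ∈ [0, R^N]. Then (2π^N/(N−1)!) ∫₀^R |v'(r)|² r dr = 2π ∫₀^{R^N} |w'(s)|² s ds, and with γ_N = 4π^N N/(N−1)!, (2π^N/(N−1)!) ∫₀^R e^{γ_N v(r)²} r^{2N−1} dr = (2π^N/N!) ∫₀^{R^N} e^{4π w(s)²} s ds. -/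
/-! Substitute `s = r ^ N`, `ds = N r ^ (N - 1) dr`. With `c = √(N π ^ (N - 1) / (N - 1)!)`, the chain
rule through the inverse of `r ↦ r ^ N` gives `w' (r ^ N) = c v' r / (N r ^ (N - 1))`, so
`w' (s) ^ 2 s ds` becomes `(c ^ 2 / N) v' r ^ 2 r dr`, while `s ds` becomes `N r ^ (2N - 1) dr`.
The constants then match because `4 π c ^ 2 = γ` and `N! = N (N - 1)!`. -/

open MeasureTheory intervalIntegral

theorem intervalIntegral_comp_pow {E : Type*} [NormedAddCommGroup E] [NormedSpace ℝ E]
    {N : ℕ} (hN : N ≠ 0) {R : ℝ} (hR : 0 ≤ R) (F : ℝ → E) :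
    ∫ s in (0 : ℝ)..R ^ N, F s = ∫ r in (0 : ℝ)..R, ((N : ℝ) * r ^ (N - 1)) • F (r ^ N) := by
  have hmono : StrictMonoOn (fun r : ℝ => r ^ N) (Set.Icc 0 R) :=
    (pow_left_strictMonoOn₀ hN).mono Set.Icc_subset_Ici_self
  have himage : (fun r : ℝ => r ^ N) '' Set.Ioo 0 R = Set.Ioo 0 (R ^ N) := by
    rw [(continuous_pow N).continuousOn.image_Ioo_of_strictMonoOn hR hmono, zero_pow hN]
  rw [integral_of_le (by positivity), integral_of_le hR, integral_Ioc_eq_integral_Ioo,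
    integral_Ioc_eq_integral_Ioo, ← himage,
    integral_image_eq_integral_abs_deriv_smul measurableSet_Ioo
      (fun r _ => (hasDerivAt_pow N r).hasDerivWithinAt)
      (hmono.injOn.mono Set.Ioo_subset_Icc_self)]
  refine setIntegral_congr_fun measurableSet_Ioo fun r hr => ?_
  rw [abs_of_nonneg (by have := hr.1.le; positivity)]

theorem HasDerivAt.comp_rpow_one_div_natCast {N : ℕ} (hN : N ≠ 0) {v : ℝ → ℝ} {v' r : ℝ}
    (hv : HasDerivAt v v' r) (hr : 0 < r) :
    HasDerivAt (fun s => v (s ^ ((1 : ℝ) / N))) (v' / (N * r ^ (N - 1))) (r ^ N) := by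
  have hroot : (r ^ N) ^ ((1 : ℝ) / N) = r := by
    rw [one_div, Real.pow_rpow_inv_natCast hr.le hN]
  have hderiv : (1 / (N : ℝ)) * (r ^ N) ^ ((1 : ℝ) / N - 1) = 1 / (N * r ^ (N - 1)) := by
    rw [Real.rpow_sub_one (by positivity), hroot, ← pow_sub_one_mul hN]
    field_simp
  have hpow := Real.hasDerivAt_rpow_const (x := r ^ N) (p := 1 / N) (Or.inl (by positivity))
  rw [← hroot] at hv
  have h := hv.comp (r ^ N) hpow
  rwa [hderiv, ← div_eq_mul_one_div] at h

theorem integral_deriv_sq_mul_comp_rpow_one_div {N : ℕ} (hN : N ≠ 0) {R : ℝ} (hR : 0 ≤ R)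
    {v : ℝ → ℝ} (hv : ∀ r ∈ Set.Ioo 0 R, DifferentiableAt ℝ v r) (a : ℝ) :
    ∫ s in (0 : ℝ)..R ^ N, deriv (fun s => a * v (s ^ ((1 : ℝ) / N))) s ^ 2 * s
      = a ^ 2 / N * ∫ r in (0 : ℝ)..R, deriv v r ^ 2 * r := by
  rw [intervalIntegral_comp_pow hN hR, ← intervalIntegral.integral_const_mul]
  refine integral_congr_Ioo_of_le hR fun r hr => ?_
  have hr0 : 0 < r := hr.1
  rw [(((hv r hr).hasDerivAt.comp_rpow_one_div_natCast hN hr0).const_mul a).deriv, smul_eq_mul,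
    ← pow_sub_one_mul hN r]
  field_simp

theorem integral_comp_rpow_one_div_mul_self {N : ℕ} (hN : N ≠ 0) {R : ℝ} (hR : 0 ≤ R)
    (f : ℝ → ℝ) :
    ∫ s in (0 : ℝ)..R ^ N, f (s ^ ((1 : ℝ) / N)) * s
      = N * ∫ r in (0 : ℝ)..R, f r * r ^ (2 * N - 1) := by
  rw [intervalIntegral_comp_pow hN hR, ← intervalIntegral.integral_const_mul]
  refine integral_congr_Ioo_of_le hR fun r hr => ?_
  rw [smul_eq_mul, one_div, Real.pow_rpow_inv_natCast hr.1.le hN,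
    show 2 * N - 1 = N - 1 + N by omega, pow_add]
  ring

theorem change_of_variables_moser_functional_general
    (N : ℕ) (hN : 2 ≤ N) (R : ℝ) (hR : 0 < R)
    (γ : ℝ) (hγ : γ = 4 * Real.pi ^ N * N / (Nat.factorial (N - 1)))
    (v : ℝ → ℝ)
    (hv : ∀ r ∈ Set.Ioo (0 : ℝ) R, DifferentiableAt ℝ v r)
    (w : ℝ → ℝ)
    (hw : ∀ s : ℝ, w s =
      Real.sqrt ((N : ℝ) * Real.pi ^ (N - 1) / (Nat.factorial (N - 1))) *
        v (s ^ ((1 : ℝ) / N))) :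
    (2 * Real.pi ^ N / (Nat.factorial (N - 1)) * ∫ r in (0 : ℝ)..R, deriv v r ^ 2 * r)
      = 2 * Real.pi * ∫ s in (0 : ℝ)..(R ^ N), deriv w s ^ 2 * s ∧
    (2 * Real.pi ^ N / (Nat.factorial (N - 1)) *
        ∫ r in (0 : ℝ)..R, Real.exp (γ * v r ^ 2) * r ^ (2 * N - 1))
      = 2 * Real.pi ^ N / (Nat.factorial N) *
        ∫ s in (0 : ℝ)..(R ^ N), Real.exp (4 * Real.pi * w s ^ 2) * s := by
  have hN0 : N ≠ 0 := by omega
  set κ : ℝ := N * Real.pi ^ (N - 1) / (Nat.factorial (N - 1)) with hκ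
  have hπκ : Real.pi * κ = Real.pi ^ N * N / (Nat.factorial (N - 1)) := by
    rw [hκ, ← pow_sub_one_mul hN0 Real.pi]
    ring
  have hexp : ∀ s, Real.exp (4 * Real.pi * w s ^ 2) * s
      = Real.exp (γ * v (s ^ ((1 : ℝ) / N)) ^ 2) * s := fun s => by
    rw [hw, mul_pow, Real.sq_sqrt (by positivity), hγ, ← mul_assoc, mul_assoc 4, hπκ]
    ring_nf
  rw [funext hexp, funext hw, integral_deriv_sq_mul_comp_rpow_one_div hN0 hR.le hv,
    integral_comp_rpow_one_div_mul_self hN0 hR.le fun r => Real.exp (γ * v r ^ 2),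
    Real.sq_sqrt (by positivity), ← Nat.mul_factorial_pred hN0]
  constructor
  · rw [← mul_assoc, mul_div_assoc', mul_assoc 2, hπκ]
    field_simp
  · push_cast
    field_simp

theorem change_of_variables_moser_functional
    (N : ℕ) (hN : 2 ≤ N) (R : ℝ) (hR : 0 < R)
    (γ : ℝ) (hγ : γ = 4 * Real.pi ^ N * N / (Nat.factorial (N - 1)))
    (v : ℝ → ℝ) (hvR : v R = 0)
    (hv : ∀ r ∈ Set.Ioo (0 : ℝ) R, DifferentiableAt ℝ v r)
    (w : ℝ → ℝ)
    (hw : ∀ s : ℝ, w s =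
      Real.sqrt ((N : ℝ) * Real.pi ^ (N - 1) / (Nat.factorial (N - 1))) *
        v (s ^ ((1 : ℝ) / N))) :
    (2 * Real.pi ^ N / (Nat.factorial (N - 1)) * ∫ r in (0 : ℝ)..R, deriv v r ^ 2 * r)
      = 2 * Real.pi * ∫ s in (0 : ℝ)..(R ^ N), deriv w s ^ 2 * s ∧
    (2 * Real.pi ^ N / (Nat.factorial (N - 1)) *
        ∫ r in (0 : ℝ)..R, Real.exp (γ * v r ^ 2) * r ^ (2 * N - 1))
      = 2 * Real.pi ^ N / (Nat.factorial N) *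
        ∫ s in (0 : ℝ)..(R ^ N), Real.exp (4 * Real.pi * w s ^ 2) * s :=
  change_of_variables_moser_functional_general N hN R hR γ hγ v hv w hw
end
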